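/- Let Γ₀ be an ADE Dynkin diagram, E₀ a chosen vertex, and Γ the triple Dynkin diagram obtained by giving E₀ weight 3. If the highest root Z(Γ₀) = Σ aᵢEᵢ of the root system of Γ₀ has coefficient a₀ = 1 at E₀, then the triple root system R(Γ) (divisors with self-intersection -2 or -3 under the Γ-form) coincides with the root system R(Γ₀). -/

import Mathlib

open Finset

def treeM (n : ℕ) (G : SimpleGraph (Fin n)) [DecidableRel G.Adj] (w : Fin n → ℤ)
    (i j : Fin n) : ℤ :=
  if i = j then -w i else if G.Adj i j then 1 else 0

def quadForm (n : ℕ) (M : Fin n → Fin n → ℤ) (Y : Fin n → ℤ) : ℤ :=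
  ∑ i, ∑ j, Y i * M i j * Y j

/-!
Raising the weight of `E₀` from `2` to `3` lowers the form by exactly `Y₀²`:
`(Y·Y)_Γ = (Y·Y)_{Γ₀} - Y₀²`. The form of `Γ₀` is even and negative definite, so it is `≤ -2`
on nonzero vectors; hence `(Y·Y)_Γ ∈ {-2, -3}` forces `(Y·Y)_{Γ₀} = -2`. Conversely, for a root
`Y` of `Γ₀` both `Y` and `-Y` are bounded by the highest root, so `|Y₀| ≤ a₀ = 1` and
`(Y·Y)_Γ = -2 - Y₀² ∈ {-2, -3}`.
-/

lemma quadForm_zero (n : ℕ) (M : Fin n → Fin n → ℤ) : quadForm n M 0 = 0 := by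
  simp [quadForm]

lemma quadForm_neg (n : ℕ) (M : Fin n → Fin n → ℤ) (Y : Fin n → ℤ) :
    quadForm n M (-Y) = quadForm n M Y := by
  simp [quadForm]

/-- Off-diagonal terms of the sum pair up under `(i, j) ↦ (j, i)` and cancel modulo `2`. -/
lemma even_quadForm (n : ℕ) (M : Fin n → Fin n → ℤ) (hsymm : ∀ i j, M i j = M j i)
    (hdiag : ∀ i, Even (M i i)) (Y : Fin n → ℤ) : Even (quadForm n M Y) := by
  rw [← ZMod.intCast_eq_zero_iff_even, quadForm]
  push_cast
  rw [← Finset.sum_product']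
  refine Finset.sum_ninvolution Prod.swap (fun ⟨i, j⟩ => ?_) (fun ⟨i, j⟩ h => ?_)
    (fun _ => mem_univ _) Prod.swap_swap
  · show (Y i : ZMod 2) * M i j * Y j + Y j * M j i * Y i = 0
    have h2 : (2 : ZMod 2) = 0 := rfl
    rw [hsymm j i]
    linear_combination (Y i : ZMod 2) * M i j * Y j * h2
  · contrapose! h
    obtain rfl : j = i := congrArg Prod.fst h
    simp [ZMod.intCast_eq_zero_iff_even.mpr (hdiag j)]

lemma quadForm_treeM_sub_quadForm_treeM (n : ℕ) (G : SimpleGraph (Fin n)) [DecidableRel G.Adj]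
    (w w' : Fin n → ℤ) (Y : Fin n → ℤ) :
    quadForm n (treeM n G w) Y - quadForm n (treeM n G w') Y = ∑ i, (w' i - w i) * Y i ^ 2 := by
  simp only [quadForm, ← Finset.sum_sub_distrib]
  refine Finset.sum_congr rfl fun i _ => ?_
  rw [Finset.sum_eq_single i]
  · simp only [treeM, ↓reduceIte]; ring
  · intro j _ hji
    simp [treeM, Ne.symm hji]
  · simp

lemma treeM_symm (n : ℕ) (G : SimpleGraph (Fin n)) [DecidableRel G.Adj] (w : Fin n → ℤ)
    (i j : Fin n) : treeM n G w i j = treeM n G w j i := by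
  unfold treeM
  by_cases h : i = j
  · subst h; rfl
  · simp [h, Ne.symm h, G.adj_comm]

lemma even_quadForm_treeM (n : ℕ) (G : SimpleGraph (Fin n)) [DecidableRel G.Adj]
    (w : Fin n → ℤ) (hw : ∀ i, Even (w i)) (Y : Fin n → ℤ) : Even (quadForm n (treeM n G w) Y) :=
  even_quadForm n _ (treeM_symm n G w) (fun i => by simpa [treeM] using hw i) Y

lemma quadForm_treeM_eq_sub_sq (n : ℕ) (G : SimpleGraph (Fin n)) [DecidableRel G.Adj]
    (w w' : Fin n → ℤ) (k : Fin n) (hk : w k = w' k + 1) (hw : ∀ i, i ≠ k → w i = w' i)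
    (Y : Fin n → ℤ) : quadForm n (treeM n G w) Y = quadForm n (treeM n G w') Y - Y k ^ 2 := by
  have hsum : ∑ i, (w' i - w i) * Y i ^ 2 = -Y k ^ 2 := by
    rw [Finset.sum_eq_single k (fun i _ hi => by simp [hw i hi]) (by simp), hk]
    ring
  linarith [quadForm_treeM_sub_quadForm_treeM n G w w' Y]

lemma abs_le_of_quadForm_eq_neg_two (n : ℕ) (M : Fin n → Fin n → ℤ) (Z : Fin n → ℤ)
    (hZ : ∀ Y : Fin n → ℤ, quadForm n M Y = -2 → ∀ i, Y i ≤ Z i)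
    (Y : Fin n → ℤ) (hY : quadForm n M Y = -2) (i : Fin n) : |Y i| ≤ Z i := by
  have hneg := hZ (-Y) (by rwa [quadForm_neg]) i
  rw [Pi.neg_apply] at hneg
  exact abs_le.mpr ⟨by linarith, hZ Y hY i⟩

theorem stmt_4_general (n : ℕ) (G : SimpleGraph (Fin (n + 1))) [DecidableRel G.Adj]
    (wΓ : Fin (n + 1) → ℤ) (hwΓ0 : wΓ 0 = 3) (hwΓ : ∀ i, i ≠ 0 → wΓ i = 2)
    (w₀ : Fin (n + 1) → ℤ) (hw₀ : ∀ i, w₀ i = 2)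
    (hADE : ∀ x : Fin (n + 1) → ℤ, x ≠ 0 → quadForm (n + 1) (treeM (n + 1) G w₀) x < 0)
    (Z : Fin (n + 1) → ℤ)
    (hZhighest : ∀ Y : Fin (n + 1) → ℤ,
      quadForm (n + 1) (treeM (n + 1) G w₀) Y = -2 → ∀ i, Y i ≤ Z i)
    (hZ0 : Z 0 = 1) :
    {Y : Fin (n + 1) → ℤ | quadForm (n + 1) (treeM (n + 1) G wΓ) Y = -2 ∨
      quadForm (n + 1) (treeM (n + 1) G wΓ) Y = -3}
    = {Y : Fin (n + 1) → ℤ | quadForm (n + 1) (treeM (n + 1) G w₀) Y = -2} := by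
  ext Y
  rw [Set.mem_ofPred_eq, Set.mem_ofPred_eq,
    quadForm_treeM_eq_sub_sq _ G wΓ w₀ 0 (by rw [hwΓ0, hw₀]; rfl)
      (fun i hi => by rw [hwΓ i hi, hw₀])]
  have hsq := sq_nonneg (Y 0)
  constructor
  · intro hY
    have hY0 : Y ≠ 0 := by rintro rfl; simp [quadForm_zero] at hY
    have hneg := hADE Y hY0
    obtain ⟨m, hm⟩ := even_quadForm_treeM _ G w₀ (fun i => by simp [hw₀]) Y
    omega
  · intro hY
    have hsq_le : Y 0 ^ 2 ≤ 1 := (sq_le_one_iff_abs_le_one _).mpr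
      (hZ0 ▸ abs_le_of_quadForm_eq_neg_two _ _ Z hZhighest Y hY 0)
    omega

/-- If the highest root `Z` of the ADE diagram `Γ₀` has coefficient `1` at the chosen
vertex `E₀` (vertex `0`), then the triple root system `R(Γ)` of the diagram `Γ`
obtained by giving `E₀` weight `3` coincides with the root system `R(Γ₀)`. -/
theorem stmt_4 (n : ℕ) (G : SimpleGraph (Fin (n + 1))) [DecidableRel G.Adj]
    (hG : G.IsTree)
    (wΓ : Fin (n + 1) → ℤ) (hwΓ0 : wΓ 0 = 3) (hwΓ : ∀ i, i ≠ 0 → wΓ i = 2)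
    (w₀ : Fin (n + 1) → ℤ) (hw₀ : ∀ i, w₀ i = 2)
    (hADE : ∀ x : Fin (n + 1) → ℤ, x ≠ 0 → quadForm (n + 1) (treeM (n + 1) G w₀) x < 0)
    (Z : Fin (n + 1) → ℤ)
    (hZroot : quadForm (n + 1) (treeM (n + 1) G w₀) Z = -2)
    (hZeff : ∀ i, 0 ≤ Z i)
    (hZhighest : ∀ Y : Fin (n + 1) → ℤ,
      quadForm (n + 1) (treeM (n + 1) G w₀) Y = -2 → ∀ i, Y i ≤ Z i)
    (hZ0 : Z 0 = 1) :
    {Y : Fin (n + 1) → ℤ | quadForm (n + 1) (treeM (n + 1) G wΓ) Y = -2 ∨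
      quadForm (n + 1) (treeM (n + 1) G wΓ) Y = -3}
    = {Y : Fin (n + 1) → ℤ | quadForm (n + 1) (treeM (n + 1) G w₀) Y = -2} :=
  stmt_4_general n G wΓ hwΓ0 hwΓ w₀ hw₀ hADE Z hZhighest hZ0
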